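/- arXiv:1410.8851 — 2 statements merged into one kernel-verified Lean document; each statement's English description precedes it below -/
import Mathlib

section
/- Let H be a finite-dimensional subspace of E-valued functions with orthonormal basis {s_a}, let Π(x) = Σ_a s_a(x)⟨·, s_a(x)⟩ be invertible, and let Q_{ab} = δ_{ab} − ⟨s_a(x), Π(x)⁻¹ s_b(x)⟩. Then Q = (Q_{ab}) is the matrix (in the basis {s_a}) of the orthogonal projection of H onto G_x = {s ∈ H : s(x) = 0}; in particular Q² = Q, Q* = Q, Σ_b Q_{ab} s_b ∈ G_x for every a, and Q acts as the identity on coordinate vectors of elements of G_x. -/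
open scoped InnerProductSpace

/-- with `s_a = ev σ_a` the values at `x` of an orthonormal basis
`{σ_a}` of `H`, `Π(x) = Σ_a s_a ⟨·, s_a⟩` invertible with inverse `PiInv`, and
`Q_{ab} = δ_{ab} - ⟨s_a, Π⁻¹ s_b⟩`, the matrix `Q` is (in the basis `{σ_a}`) the
orthogonal projection of `H` onto `G_x = {ψ ∈ H : ψ(x) = 0}`: it is Hermitian and
idempotent, `Σ_b Q_{ab} σ_b ∈ G_x` for every `a`, and `Q` fixes the coordinate
vector of every element of `G_x`. -/
theorem Q_is_projection_onto_Gx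
    {H E : Type*}
    [NormedAddCommGroup H] [InnerProductSpace ℂ H] [FiniteDimensional ℂ H]
    [NormedAddCommGroup E] [InnerProductSpace ℂ E] [FiniteDimensional ℂ E]
    (N : ℕ) (σ : OrthonormalBasis (Fin N) ℂ H)
    (ev : H →ₗ[ℂ] E) (s : Fin N → E) (hs : ∀ a, s a = ev (σ a))
    (Pi PiInv : E →ₗ[ℂ] E)
    (hPi : ∀ v, Pi v = ∑ a, ⟪s a, v⟫_ℂ • s a)
    (hInv₁ : ∀ v, Pi (PiInv v) = v) (hInv₂ : ∀ v, PiInv (Pi v) = v)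
    (Q : Matrix (Fin N) (Fin N) ℂ)
    (hQ : ∀ a b, Q a b = (if a = b then 1 else 0) - ⟪PiInv (s b), s a⟫_ℂ) :
    Q * Q = Q ∧ Q.IsHermitian ∧
    (∀ a, ev (∑ b, Q a b • σ b) = 0) ∧
    (∀ ψ : H, ev ψ = 0 →
      Matrix.vecMul (fun a => ⟪σ a, ψ⟫_ℂ) Q = fun a => ⟪σ a, ψ⟫_ℂ) := by
  have hPsa : ∀ u v : E, ⟪Pi u, v⟫_ℂ = ⟪u, Pi v⟫_ℂ := by
    intro u v
    simp only [hPi, inner_sum, sum_inner, inner_smul_left, inner_smul_right,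
      inner_conj_symm]
    exact Finset.sum_congr rfl fun a _ => by ring
  have hInvSa : ∀ u v : E, ⟪PiInv u, v⟫_ℂ = ⟪u, PiInv v⟫_ℂ := by
    intro u v
    calc ⟪PiInv u, v⟫_ℂ = ⟪PiInv u, Pi (PiInv v)⟫_ℂ := by rw [hInv₁]
      _ = ⟪Pi (PiInv u), PiInv v⟫_ℂ := (hPsa _ _).symm
      _ = ⟪u, PiInv v⟫_ℂ := by rw [hInv₁]
  have hkey : ∀ v : E, (∑ b, ⟪PiInv (s b), v⟫_ℂ • s b) = v := by
    intro v
    calc (∑ b, ⟪PiInv (s b), v⟫_ℂ • s b) = ∑ b, ⟪s b, PiInv v⟫_ℂ • s b := by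
          simp_rw [hInvSa]
      _ = Pi (PiInv v) := (hPi _).symm
      _ = v := hInv₁ v
  have hP2 : ∀ a b, (∑ c, ⟪PiInv (s c), s a⟫_ℂ * ⟪PiInv (s b), s c⟫_ℂ)
      = ⟪PiInv (s b), s a⟫_ℂ := by
    intro a b
    have h := congrArg (fun v => ⟪PiInv (s b), v⟫_ℂ) (hkey (s a))
    simpa [inner_sum, inner_smul_right, mul_comm] using h
  refine ⟨?_, ?_, ?_, ?_⟩
  · ext a b
    rw [Matrix.mul_apply]
    simp only [hQ, sub_mul, mul_sub, Finset.sum_sub_distrib]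
    rw [hP2]
    simp [Finset.sum_ite_eq, Finset.sum_ite_eq', ite_mul, mul_ite, mul_comm]
  · unfold Matrix.IsHermitian
    ext a b
    simp only [Matrix.conjTranspose_apply, hQ, star_sub, RCLike.star_def,
      apply_ite (starRingEnd ℂ), map_one, map_zero, inner_conj_symm]
    rw [hInvSa]
    congr 1
    simp [eq_comm]
  · intro a
    rw [map_sum]
    simp only [hQ, sub_smul, map_sub, map_smul, ← hs]
    rw [Finset.sum_sub_distrib]
    rw [hkey (s a)]
    simp [Finset.sum_ite_eq, ite_smul]
  · intro ψ hψ
    have hev : (∑ a, ⟪σ a, ψ⟫_ℂ • s a) = 0 := by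
      have : (∑ a, ⟪σ a, ψ⟫_ℂ • σ a) = ψ := σ.sum_repr' ψ
      calc (∑ a, ⟪σ a, ψ⟫_ℂ • s a) = ev (∑ a, ⟪σ a, ψ⟫_ℂ • σ a) := by
            rw [map_sum]; simp [hs]
        _ = ev ψ := by rw [this]
        _ = 0 := hψ
    funext b
    rw [Matrix.vecMul]
    simp only [dotProduct, hQ, mul_sub, Finset.sum_sub_distrib]
    have h2 : (∑ a, ⟪σ a, ψ⟫_ℂ * ⟪PiInv (s b), s a⟫_ℂ) = 0 := by
      have h := congrArg (fun v => ⟪PiInv (s b), v⟫_ℂ) hev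
      simpa [inner_sum, inner_smul_right, mul_comm] using h
    rw [h2]
    simp [Finset.sum_ite_eq, mul_ite]
end

section
/- With H, {s_a}, Π(x), Q as above, a vector s = Σ_a c_a s_a ∈ H satisfies the 'P_x' condition (s ⟂ G_x, i.e., ⟨s, ψ⟩_{L²} = 0 for all ψ ∈ H with ψ(x) = 0) if and only if c = V c where V_{ab} = ⟨s_a(x), Π(x)⁻¹ s_b(x)⟩. -/
open scoped InnerProductSpace

/-!
Write `T = ev`. The formula for `Π` says `Π = T T†`, so `Π⁻¹` is self-adjoint and
`T† Π⁻¹ T` is the identity on `range T†`. The `P_x` condition says that `s` lies in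
`(ker T)ᗮ = range T†`, i.e. that `T† Π⁻¹ T s = s`; and the `b`-th coordinate of
`T† Π⁻¹ T s` in the basis `σ` is `⟪s_b, Π⁻¹ T s⟫ = (c V)_b`.
-/

namespace LinearMap

variable {𝕜 H E : Type*} [RCLike 𝕜]
  [NormedAddCommGroup H] [InnerProductSpace 𝕜 H]
  [NormedAddCommGroup E] [InnerProductSpace 𝕜 E]

theorem IsSymmetric.of_rightInverse {A B : E →ₗ[𝕜] E} (hA : A.IsSymmetric)
    (hAB : ∀ v, A (B v) = v) : B.IsSymmetric := fun v w =>
  calc ⟪B v, w⟫_𝕜 = ⟪B v, A (B w)⟫_𝕜 := by rw [hAB]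
    _ = ⟪A (B v), B w⟫_𝕜 := (hA _ _).symm
    _ = ⟪v, B w⟫_𝕜 := by rw [hAB]

variable [FiniteDimensional 𝕜 H] [FiniteDimensional 𝕜 E]

theorem self_comp_adjoint_apply_eq_sum {ι : Type*} [Fintype ι] (σ : OrthonormalBasis ι 𝕜 H)
    (T : H →ₗ[𝕜] E) (v : E) : T (T.adjoint v) = ∑ a, ⟪T (σ a), v⟫_𝕜 • T (σ a) := by
  conv_lhs => rw [← σ.sum_repr' (T.adjoint v)]
  simp only [map_sum, map_smul, adjoint_inner_right]

theorem mem_range_adjoint_iff {T : H →ₗ[𝕜] E} {R : E →ₗ[𝕜] E}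
    (hR : ∀ v, T (T.adjoint (R v)) = v) (u : H) :
    u ∈ range T.adjoint ↔ T.adjoint (R (T u)) = u := by
  refine ⟨?_, fun h => ⟨_, h⟩⟩
  rintro ⟨y, rfl⟩
  have hker : R (T (T.adjoint y)) - y ∈ ker (T ∘ₗ T.adjoint) := by simp [hR]
  rwa [ker_self_comp_adjoint, mem_ker, map_sub, sub_eq_zero] at hker

end LinearMap

open LinearMap

theorem Px_condition_iff_Vc_eq_c_general
    {H E : Type*}
    [NormedAddCommGroup H] [InnerProductSpace ℂ H] [FiniteDimensional ℂ H]
    [NormedAddCommGroup E] [InnerProductSpace ℂ E] [FiniteDimensional ℂ E]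
    (N : ℕ) (σ : OrthonormalBasis (Fin N) ℂ H)
    (ev : H →ₗ[ℂ] E) (s : Fin N → E) (hs : ∀ a, s a = ev (σ a))
    (Pi PiInv : E →ₗ[ℂ] E)
    (hPi : ∀ v, Pi v = ∑ a, ⟪s a, v⟫_ℂ • s a)
    (hInv₁ : ∀ v, Pi (PiInv v) = v)
    (V : Matrix (Fin N) (Fin N) ℂ)
    (hV : ∀ a b, V a b = ⟪PiInv (s b), s a⟫_ℂ)
    (c : Fin N → ℂ) :
    (∀ ψ : H, ev ψ = 0 → ⟪ψ, ∑ a, c a • σ a⟫_ℂ = 0) ↔ Matrix.vecMul c V = c := by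
  obtain rfl : s = fun a => ev (σ a) := funext hs
  have hPi_eq : Pi = ev ∘ₗ ev.adjoint := by
    ext v
    rw [hPi, comp_apply, ev.self_comp_adjoint_apply_eq_sum σ]
  have hR : ∀ v, ev (ev.adjoint (PiInv v)) = v := by simpa [hPi_eq] using hInv₁
  have hPiInv : PiInv.IsSymmetric :=
    (hPi_eq ▸ ev.isSymmetric_self_comp_adjoint).of_rightInverse hInv₁
  set u := ∑ a, c a • σ a
  have hcoord : ∀ b, ⟪σ b, ev.adjoint (PiInv (ev u))⟫_ℂ = Matrix.vecMul c V b := by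
    intro b
    rw [adjoint_inner_right, ← hPiInv]
    simp only [u, map_sum, map_smul, inner_sum, inner_smul_right, Matrix.vecMul, dotProduct, hV]
  have hu : ∀ b, ⟪σ b, u⟫_ℂ = c b := σ.orthonormal.inner_right_fintype c
  change u ∈ (ker ev)ᗮ ↔ _
  rw [orthogonal_ker, mem_range_adjoint_iff hR]
  refine ⟨fun h => funext fun b => by rw [← hcoord, h, hu], fun h => ?_⟩
  exact InnerProductSpace.ext_inner_left_basis σ.toBasis fun b => by simp [hcoord, hu, h]

/-- with `s_a = ev σ_a`, `Π(x)` invertible and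
`V_{ab} = ⟨s_a(x), Π(x)⁻¹ s_b(x)⟩`, an element `s = Σ_a c_a σ_a` of `H` is
`L²`-orthogonal to `G_x = {ψ ∈ H : ψ(x) = 0}` if and only if `c = V c`. -/
theorem Px_condition_iff_Vc_eq_c
    {H E : Type*}
    [NormedAddCommGroup H] [InnerProductSpace ℂ H] [FiniteDimensional ℂ H]
    [NormedAddCommGroup E] [InnerProductSpace ℂ E] [FiniteDimensional ℂ E]
    (N : ℕ) (σ : OrthonormalBasis (Fin N) ℂ H)
    (ev : H →ₗ[ℂ] E) (s : Fin N → E) (hs : ∀ a, s a = ev (σ a))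
    (Pi PiInv : E →ₗ[ℂ] E)
    (hPi : ∀ v, Pi v = ∑ a, ⟪s a, v⟫_ℂ • s a)
    (hInv₁ : ∀ v, Pi (PiInv v) = v) (hInv₂ : ∀ v, PiInv (Pi v) = v)
    (V : Matrix (Fin N) (Fin N) ℂ)
    (hV : ∀ a b, V a b = ⟪PiInv (s b), s a⟫_ℂ)
    (c : Fin N → ℂ) :
    (∀ ψ : H, ev ψ = 0 → ⟪ψ, ∑ a, c a • σ a⟫_ℂ = 0) ↔ Matrix.vecMul c V = c :=
  Px_condition_iff_Vc_eq_c_general N σ ev s hs Pi PiInv hPi hInv₁ V hV c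
end
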